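/- arXiv:2406.19424 — 2 statements merged into one kernel-verified Lean document; each statement's English description precedes it below -/
import Mathlib

section
/- Suppose P_t = (1 + k_t) P_{t−1} − d_t, d_t = (1 + g_t) d_{t−1}, with 1 + k_t > 0, 1 + g_t > 0, d_0 > 0 for all t, and suppose the discounted price transversality condition holds: ∏_{j=1}^{N} (1+g_{t+j})/(1+k_{t+j}) · P_{t+N}/d_{t+N} → 0 as N → ∞ (equivalently, P_{t+N} ∏_{j=1}^{r+N}(1+k_{t+j})^{-1} → 0 appropriately normalized). Then for all r ≥ 0, P_{t+r} = ∑_{q=1}^∞ (∏_{j=r+1}^{r+q} (1+g_{t+j})/(1+k_{t+j})) · (∏_{j=1}^r (1+g_{t+j})) · d_t, whenever the series converges. -/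
/-!
Dividing the price recursion by the cumulative discount factor `∏ (1 + k)` makes it telescope:
the discounted price at horizon `N` is the current price minus the first `N` discounted
dividends, and transversality sends it to `0`. The dividend recursion identifies the paper's
products of growth-over-discount ratios with these discounted future dividends.
-/

open Finset Filter Topology

theorem Finset.prod_Icc_add_left {M : Type*} [CommMonoid M] (f : ℕ → M) (r n : ℕ) :
    ∏ j ∈ Icc (r + 1) (r + n), f j = ∏ j ∈ Icc 1 n, f (r + j) := by
  rw [← map_add_left_Icc, prod_map]
  rfl

theorem eq_mul_prod_Icc_of_succ_eq_mul {M : Type*} [CommMonoid M] {x c : ℕ → M}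
    (hx : ∀ n, x (n + 1) = c (n + 1) * x n) (s m : ℕ) :
    x (s + m) = x s * ∏ j ∈ Icc 1 m, c (s + j) := by
  induction m with
  | zero => simp
  | succ m ih => rw [← add_assoc, hx, ih, prod_Icc_succ_top (by omega), ← add_assoc]; ac_rfl

section DividendDiscount

variable {K : Type*} [Field K] {P a d : ℕ → K}

theorem discounted_price_eq_sub_sum (ha : ∀ n, a n ≠ 0)
    (hP : ∀ n, P (n + 1) = a (n + 1) * P n - d (n + 1)) (s N : ℕ) :
    (∏ j ∈ Icc 1 N, a (s + j))⁻¹ * P (s + N) =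
      P s - ∑ q ∈ range N, (∏ j ∈ Icc 1 (q + 1), a (s + j))⁻¹ * d (s + (q + 1)) := by
  induction N with
  | zero => simp
  | succ N ih =>
    have hA : ∏ j ∈ Icc 1 N, a (s + j) ≠ 0 := prod_ne_zero_iff.mpr fun j _ => ha _
    rw [sum_range_succ, ← sub_sub, ← ih, prod_Icc_succ_top (by omega), ← add_assoc, hP]
    field_simp [ha (s + N + 1)]

theorem price_eq_tsum_discounted_dividends [TopologicalSpace K] [IsTopologicalRing K]
    [T2Space K] (ha : ∀ n, a n ≠ 0) (hP : ∀ n, P (n + 1) = a (n + 1) * P n - d (n + 1))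
    (s : ℕ)
    (htv : Tendsto (fun N => (∏ j ∈ Icc 1 N, a (s + j))⁻¹ * P (s + N)) atTop (𝓝 0))
    (hsum : Summable fun q => (∏ j ∈ Icc 1 (q + 1), a (s + j))⁻¹ * d (s + (q + 1))) :
    P s = ∑' q, (∏ j ∈ Icc 1 (q + 1), a (s + j))⁻¹ * d (s + (q + 1)) := by
  simp_rw [discounted_price_eq_sub_sum ha hP] at htv
  have hpartial := (tendsto_const_nhds (x := P s)).sub htv
  simp only [sub_sub_cancel, sub_zero] at hpartial
  exact tendsto_nhds_unique hpartial hsum.hasSum.tendsto_sum_nat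

theorem gordon_term_eq_discounted_dividend {g k : ℕ → K}
    (hd : ∀ n, d (n + 1) = g (n + 1) * d n) (t r q : ℕ) :
    (∏ j ∈ Icc (r + 1) (r + (q + 1)), g (t + j) / k (t + j)) * (∏ j ∈ Icc 1 r, g (t + j)) * d t
      = (∏ j ∈ Icc 1 (q + 1), k (t + r + j))⁻¹ * d (t + r + (q + 1)) := by
  rw [eq_mul_prod_Icc_of_succ_eq_mul hd (t + r), eq_mul_prod_Icc_of_succ_eq_mul hd t,
    prod_Icc_add_left (fun j => g (t + j) / k (t + j)), prod_div_distrib]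
  simp only [add_assoc]
  ring

end DividendDiscount

theorem gordon_price_infinite_horizon_general
    (P k g d : ℕ → ℝ) (t : ℕ)
    (hk : ∀ s : ℕ, 0 < 1 + k s)
    (hrecP : ∀ s : ℕ, 1 ≤ s → P s = (1 + k s) * P (s - 1) - d s)
    (hrecd : ∀ s : ℕ, 1 ≤ s → d s = (1 + g s) * d (s - 1)) :
    ∀ r : ℕ,
      Tendsto (fun N : ℕ =>
          (∏ j ∈ Icc 1 N, (1 + k (t + r + j)))⁻¹ * P (t + r + N)) atTop (nhds 0) →
      Summable (fun q : ℕ =>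
          (∏ j ∈ Icc (r + 1) (r + (q + 1)), (1 + g (t + j)) / (1 + k (t + j)))
            * (∏ j ∈ Icc 1 r, (1 + g (t + j))) * d t) →
      P (t + r) = ∑' q : ℕ,
          (∏ j ∈ Icc (r + 1) (r + (q + 1)), (1 + g (t + j)) / (1 + k (t + j)))
            * (∏ j ∈ Icc 1 r, (1 + g (t + j))) * d t := by
  intro r htv hsum
  have hP (n : ℕ) : P (n + 1) = (1 + k (n + 1)) * P n - d (n + 1) := hrecP (n + 1) n.succ_pos
  have hd (n : ℕ) : d (n + 1) = (1 + g (n + 1)) * d n := hrecd (n + 1) n.succ_pos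
  have hterm := gordon_term_eq_discounted_dividend (g := (1 + g ·)) (k := (1 + k ·)) hd t r
  simp_rw [hterm] at hsum ⊢
  exact price_eq_tsum_discounted_dividends (fun n => (hk n).ne') hP (t + r) htv hsum

theorem gordon_price_infinite_horizon
    (P k g d : ℕ → ℝ) (t : ℕ)
    (hk : ∀ s : ℕ, 0 < 1 + k s) (hg : ∀ s : ℕ, 0 < 1 + g s) (hd0 : 0 < d 0)
    (hrecP : ∀ s : ℕ, 1 ≤ s → P s = (1 + k s) * P (s - 1) - d s)
    (hrecd : ∀ s : ℕ, 1 ≤ s → d s = (1 + g s) * d (s - 1)) :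
    ∀ r : ℕ,
      Tendsto (fun N : ℕ =>
          (∏ j ∈ Icc 1 N, (1 + k (t + r + j)))⁻¹ * P (t + r + N)) atTop (nhds 0) →
      Summable (fun q : ℕ =>
          (∏ j ∈ Icc (r + 1) (r + (q + 1)), (1 + g (t + j)) / (1 + k (t + j)))
            * (∏ j ∈ Icc 1 r, (1 + g (t + j))) * d t) →
      P (t + r) = ∑' q : ℕ,
          (∏ j ∈ Icc (r + 1) (r + (q + 1)), (1 + g (t + j)) / (1 + k (t + j)))
            * (∏ j ∈ Icc 1 r, (1 + g (t + j))) * d t :=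
  gordon_price_infinite_horizon_general P k g d t hk hrecP hrecd
end

section
/- Let A* be a diagonalizable matrix with A* = C Λ C^{-1}, Λ diagonal with entries λ_1, …, λ_{np} all of modulus < 1, and Φ_j = J(A*)^j J'. Then ∑_{j₁=1}^q ∑_{j₂=j₁}^q Φ_{j₂} Σ Φ_{j₁−1}' = JC (M ⊙ (∑_{j₁=1}^q ∑_{j₂=j₁}^q d(j₂) d(j₁−1)')) C' J' where M := C^{-1} J' Σ J (C')^{-1} and d(j) is the vector of diagonal entries of Λ^j, and the limit as q → ∞ exists, with the (α,β) entry of the limiting scalar double sum equal to λ_α / ((1 − λ_α)(1 − λ_α λ_β)). -/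
/-!
Since `A ^ j = C Λ ^ j C⁻¹`, each term `Φ j₂ Σ (Φ (j₁ - 1))ᵀ` equals `J C (Λ ^ j₂ M Λ ^ (j₁ - 1)) Cᵀ Jᵀ`,
and multiplying `M` by diagonal matrices on both sides is the Hadamard product with
`d j₂ d (j₁ - 1)ᵀ`. The map `X ↦ J C (M ⊙ X) Cᵀ Jᵀ` is additive and continuous, so it commutes with the
double sum and with the limit. The `(α, β)` entry of the inner double sum is an explicit combination of
`(λ_α λ_β) ^ q`, `λ_α ^ q` and `λ_β ^ q`, all of which tend to zero.
-/

open Matrix Finset Filter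

section Scalar

variable {𝕜 : Type*}

theorem sum_Icc_one_pow_sub_one [Field 𝕜] {b : 𝕜} (hb : b ≠ 1) (q : ℕ) :
    ∑ j ∈ Icc 1 q, b ^ (j - 1) = (b ^ q - 1) / (b - 1) := by
  rw [← Ico_add_one_right_eq_Icc, sum_Ico_eq_sum_range, ← geom_sum_eq hb]
  simp

theorem triangular_sum_pow_mul_pow [Field 𝕜] {a b : 𝕜} (ha : a ≠ 1) (hb : b ≠ 1)
    (hab : a * b ≠ 1) (q : ℕ) :
    ∑ j₁ ∈ Icc 1 q, ∑ j₂ ∈ Icc j₁ q, a ^ j₂ * b ^ (j₁ - 1)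
      = (a * (1 - (a * b) ^ q) / (1 - a * b) - a ^ (q + 1) * (1 - b ^ q) / (1 - b)) / (1 - a) := by
  have ha' : 1 - a ≠ 0 := sub_ne_zero.2 ha.symm
  have hb' : 1 - b ≠ 0 := sub_ne_zero.2 hb.symm
  have hab' : 1 - a * b ≠ 0 := sub_ne_zero.2 hab.symm
  induction q with
  | zero => simp
  | succ q ih =>
    have hstep : ∑ j₁ ∈ Icc 1 (q + 1), ∑ j₂ ∈ Icc j₁ (q + 1), a ^ j₂ * b ^ (j₁ - 1)
        = ∑ j₁ ∈ Icc 1 q, ∑ j₂ ∈ Icc j₁ q, a ^ j₂ * b ^ (j₁ - 1)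
          + a ^ (q + 1) * ∑ j₁ ∈ Icc 1 (q + 1), b ^ (j₁ - 1) := by
      have hrow : ∀ j₁ ∈ Icc 1 q, ∑ j₂ ∈ Icc j₁ (q + 1), a ^ j₂ * b ^ (j₁ - 1)
          = ∑ j₂ ∈ Icc j₁ q, a ^ j₂ * b ^ (j₁ - 1) + a ^ (q + 1) * b ^ (j₁ - 1) :=
        fun j₁ hj₁ => sum_Icc_succ_top (by grind) _
      rw [sum_Icc_succ_top (by omega), mul_sum, sum_Icc_succ_top (by omega : 1 ≤ q + 1),
        Icc_self, sum_singleton, sum_congr rfl hrow, sum_add_distrib]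
      ring
    rw [hstep, ih, sum_Icc_one_pow_sub_one hb]
    field_simp
    ring

theorem tendsto_triangular_sum_pow_mul_pow [NormedField 𝕜] {a b : 𝕜} (ha : ‖a‖ < 1)
    (hb : ‖b‖ < 1) :
    Tendsto (fun q : ℕ => ∑ j₁ ∈ Icc 1 q, ∑ j₂ ∈ Icc j₁ q, a ^ j₂ * b ^ (j₁ - 1))
      atTop (nhds (a / ((1 - a) * (1 - a * b)))) := by
  have hab : ‖a * b‖ < 1 := by
    rw [norm_mul]
    exact mul_lt_one_of_nonneg_of_lt_one_left (norm_nonneg a) ha hb.le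
  have ne_one {x : 𝕜} (hx : ‖x‖ < 1) : x ≠ 1 := by rintro rfl; simp at hx
  have one_sub_pow {x : 𝕜} (hx : ‖x‖ < 1) :
      Tendsto (fun q : ℕ => 1 - x ^ q) atTop (nhds 1) := by
    simpa using tendsto_const_nhds.sub (tendsto_pow_atTop_nhds_zero_of_norm_lt_one hx)
  have hlim := ((((one_sub_pow hab).const_mul a).div_const (1 - a * b)).sub
    ((((tendsto_pow_atTop_nhds_zero_of_norm_lt_one ha).const_mul a).mul (one_sub_pow hb)).div_const
      (1 - b))).div_const (1 - a)
  rw [mul_one, mul_zero, zero_mul, zero_div, sub_zero, div_div, mul_comm (1 - a * b)] at hlim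
  refine hlim.congr fun q => ?_
  rw [triangular_sum_pow_mul_pow (ne_one ha) (ne_one hb) (ne_one hab), pow_succ']

end Scalar

section Matrix

variable {m k R : Type*}

theorem Matrix.hadamard_sum {n ι : Type*} [NonUnitalNonAssocSemiring R] (s : Finset ι)
    (N : Matrix m n R) (f : ι → Matrix m n R) :
    N ⊙ ∑ i ∈ s, f i = ∑ i ∈ s, N ⊙ f i := by
  ext a b
  simp only [hadamard_apply, sum_apply, mul_sum]

@[fun_prop]
theorem Continuous.matrix_hadamard {X n : Type*} [TopologicalSpace X] [Mul R] [TopologicalSpace R]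
    [ContinuousMul R] {A B : X → Matrix m n R} (hA : Continuous A) (hB : Continuous B) :
    Continuous fun x => A x ⊙ B x :=
  continuous_matrix fun i j => (hA.matrix_elem i j).mul (hB.matrix_elem i j)

theorem tendsto_triangular_sum_vecMulVec_pow {𝕜 : Type*} [NormedField 𝕜] {lam : m → 𝕜}
    (hlam : ∀ i, ‖lam i‖ < 1) :
    Tendsto (fun q : ℕ => ∑ j₁ ∈ Icc 1 q, ∑ j₂ ∈ Icc j₁ q, vecMulVec (lam ^ j₂) (lam ^ (j₁ - 1)))
      atTop (nhds (of fun α β => lam α / ((1 - lam α) * (1 - lam α * lam β)))) := by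
  refine tendsto_pi_nhds.2 fun α => tendsto_pi_nhds.2 fun β => ?_
  simpa only [Matrix.sum_apply, vecMulVec_apply, Pi.pow_apply, of_apply]
    using tendsto_triangular_sum_pow_mul_pow (hlam α) (hlam β)

variable [Fintype m] [DecidableEq m]

theorem Matrix.diagonal_mul_mul_diagonal [CommSemiring R] (u w : m → R) (N : Matrix m m R) :
    diagonal u * N * diagonal w = N ⊙ vecMulVec u w := by
  ext i j
  simp only [mul_diagonal, diagonal_mul, hadamard_apply, vecMulVec_apply]
  ring

theorem Matrix.conj_diagonal_pow [CommRing R] {C : Matrix m m R} (hC : IsUnit C.det)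
    (lam : m → R) (j : ℕ) :
    (C * diagonal lam * C⁻¹) ^ j = C * diagonal (lam ^ j) * C⁻¹ := by
  rw [← diagonal_pow]
  exact (C.nonsingInvUnit hC).conj_pow (diagonal lam) j

theorem Matrix.conj_diagonal_pow_sandwich [CommRing R] [Fintype k] {C : Matrix m m R}
    (hC : IsUnit C.det) (lam : m → R) (J : Matrix k m R) (S : Matrix k k R) (i j : ℕ) :
    J * (C * diagonal lam * C⁻¹) ^ i * Jᵀ * S * (J * (C * diagonal lam * C⁻¹) ^ j * Jᵀ)ᵀ
      = J * C * ((C⁻¹ * Jᵀ * S * J * (Cᵀ)⁻¹) ⊙ vecMulVec (lam ^ i) (lam ^ j)) * Cᵀ * Jᵀ := by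
  rw [← diagonal_mul_mul_diagonal, conj_diagonal_pow hC, conj_diagonal_pow hC]
  simp only [transpose_mul, transpose_transpose, transpose_nonsing_inv, diagonal_transpose,
    Matrix.mul_assoc]

end Matrix

theorem gamma_double_sum_diagonalizable_general
    (n p : ℕ) (A C : Matrix (Fin (n * p)) (Fin (n * p)) ℂ)
    (lam : Fin (n * p) → ℂ) (hC : IsUnit C.det)
    (hA : A = C * diagonal lam * C⁻¹)
    (hlam : ∀ i, ‖lam i‖ < 1)
    (J : Matrix (Fin n) (Fin (n * p)) ℂ)
    (S : Matrix (Fin n) (Fin n) ℂ)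
    (Φ : ℕ → Matrix (Fin n) (Fin n) ℂ) (hΦ : ∀ j, Φ j = J * A ^ j * Jᵀ)
    (M : Matrix (Fin (n * p)) (Fin (n * p)) ℂ)
    (hM : M = C⁻¹ * Jᵀ * S * J * (Cᵀ)⁻¹)
    (d : ℕ → Fin (n * p) → ℂ) (hd : ∀ j i, d j i = lam i ^ j) :
    (∀ q : ℕ,
        ∑ j₁ ∈ Icc 1 q, ∑ j₂ ∈ Icc j₁ q, Φ j₂ * S * (Φ (j₁ - 1))ᵀ
          = J * C
              * (M ⊙ (∑ j₁ ∈ Icc 1 q, ∑ j₂ ∈ Icc j₁ q, vecMulVec (d j₂) (d (j₁ - 1))))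
              * Cᵀ * Jᵀ) ∧
      (∃ Γ : Matrix (Fin n) (Fin n) ℂ,
        Tendsto (fun q : ℕ => ∑ j₁ ∈ Icc 1 q, ∑ j₂ ∈ Icc j₁ q, Φ j₂ * S * (Φ (j₁ - 1))ᵀ)
          atTop (nhds Γ)) ∧
      ∀ (α β : Fin (n * p)),
        Tendsto (fun q : ℕ => ∑ j₁ ∈ Icc 1 q, ∑ j₂ ∈ Icc j₁ q, lam α ^ j₂ * lam β ^ (j₁ - 1))
          atTop (nhds (lam α / ((1 - lam α) * (1 - lam α * lam β)))) := by
  obtain rfl : d = fun j => lam ^ j := funext₂ hd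
  subst hA hM
  have hsum (q : ℕ) : ∑ j₁ ∈ Icc 1 q, ∑ j₂ ∈ Icc j₁ q, Φ j₂ * S * (Φ (j₁ - 1))ᵀ
      = J * C * ((C⁻¹ * Jᵀ * S * J * (Cᵀ)⁻¹) ⊙
          ∑ j₁ ∈ Icc 1 q, ∑ j₂ ∈ Icc j₁ q, vecMulVec (lam ^ j₂) (lam ^ (j₁ - 1))) * Cᵀ * Jᵀ := by
    simp only [hadamard_sum, Matrix.mul_sum, Matrix.sum_mul, hΦ, conj_diagonal_pow_sandwich hC]
  have hcont : Continuous fun X => J * C * ((C⁻¹ * Jᵀ * S * J * (Cᵀ)⁻¹) ⊙ X) * Cᵀ * Jᵀ := by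
    fun_prop
  exact ⟨hsum,
    ⟨_, ((hcont.tendsto _).comp (tendsto_triangular_sum_vecMulVec_pow hlam)).congr
      fun q => (hsum q).symm⟩,
    fun α β => tendsto_triangular_sum_pow_mul_pow (hlam α) (hlam β)⟩

theorem gamma_double_sum_diagonalizable
    (n p : ℕ) (A C : Matrix (Fin (n * p)) (Fin (n * p)) ℂ)
    (lam : Fin (n * p) → ℂ) (hC : IsUnit C.det)
    (hA : A = C * diagonal lam * C⁻¹)
    (hlam : ∀ i, ‖lam i‖ < 1)
    (hdistinct : Function.Injective lam)
    (J : Matrix (Fin n) (Fin (n * p)) ℂ)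
    (hJ : ∀ (i : Fin n) (j : Fin (n * p)), J i j = if (j : ℕ) = (i : ℕ) then 1 else 0)
    (S : Matrix (Fin n) (Fin n) ℂ)
    (Φ : ℕ → Matrix (Fin n) (Fin n) ℂ) (hΦ : ∀ j, Φ j = J * A ^ j * Jᵀ)
    (M : Matrix (Fin (n * p)) (Fin (n * p)) ℂ)
    (hM : M = C⁻¹ * Jᵀ * S * J * (Cᵀ)⁻¹)
    (d : ℕ → Fin (n * p) → ℂ) (hd : ∀ j i, d j i = lam i ^ j) :
    (∀ q : ℕ,
        ∑ j₁ ∈ Icc 1 q, ∑ j₂ ∈ Icc j₁ q, Φ j₂ * S * (Φ (j₁ - 1))ᵀ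
          = J * C
              * (M ⊙ (∑ j₁ ∈ Icc 1 q, ∑ j₂ ∈ Icc j₁ q, vecMulVec (d j₂) (d (j₁ - 1))))
              * Cᵀ * Jᵀ) ∧
      (∃ Γ : Matrix (Fin n) (Fin n) ℂ,
        Tendsto (fun q : ℕ => ∑ j₁ ∈ Icc 1 q, ∑ j₂ ∈ Icc j₁ q, Φ j₂ * S * (Φ (j₁ - 1))ᵀ)
          atTop (nhds Γ)) ∧
      ∀ (α β : Fin (n * p)),
        Tendsto (fun q : ℕ => ∑ j₁ ∈ Icc 1 q, ∑ j₂ ∈ Icc j₁ q, lam α ^ j₂ * lam β ^ (j₁ - 1))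
          atTop (nhds (lam α / ((1 - lam α) * (1 - lam α * lam β)))) :=
  gamma_double_sum_diagonalizable_general n p A C lam hC hA hlam J S Φ hΦ M hM d hd
end
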